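/- Let D ≥ 2 be squarefree, regard K = ℚ(√D) as a subfield of ℝ (with √D > 0), and let u ∈ ℤ_Kˣ be a unit with N(u) = −1 and u > 1. Let ℓ be an odd positive integer and set d := u^{2ℓ} + u^{−2ℓ} + 1, a rational integer. Then √(d+1) = u^ℓ + u^{−ℓ}, and if ξ, η ∈ ℂ satisfy ξ² = −2 − √(d+1) and η² = −u^ℓ, then the subfields K(ξ) and K(η) of ℂ are equal, and this field has degree 2 over K. (The underlying identity is u^ℓ·(2 + √(d+1)) = (u^ℓ + 1)², so (−2 − √(d+1)) and (−u^ℓ) differ by a square in K.) -/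

import Mathlib

open Polynomial

set_option maxHeartbeats 1000000 in
set_option synthInstance.maxHeartbeats 1000000 in

/-- Let `K = ℚ(√D) ⊆ ℝ ⊆ ℂ` (with `√D > 0`), `τ` the nontrivial automorphism of `K`,
and let `u ∈ ℤ_Kˣ` (i.e. `u` and `u⁻¹` are algebraic integers) with `N(u) = u·u^τ = −1`
and `u > 1`. For odd positive `ℓ` set `d := u^{2ℓ} + u^{−2ℓ} + 1 ∈ ℤ`. Then
`√(d+1) = u^ℓ + u^{−ℓ}`, and if `ξ² = −2 − √(d+1)` and `η² = −u^ℓ` in `ℂ`, then the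
subfields `K(ξ)` and `K(η)` of `ℂ` coincide and have degree `2` over `K`. -/
theorem stmt_11 (D : ℕ) (hD : Squarefree D) (hD2 : 2 ≤ D)
    (K : Subfield ℂ) (hK : K = Subfield.closure {((Real.sqrt D : ℝ) : ℂ)})
    (τ : K ≃+* K)
    (hτ : ∀ x : K, (x : ℂ) = ((Real.sqrt D : ℝ) : ℂ) →
      ((τ x : K) : ℂ) = -((Real.sqrt D : ℝ) : ℂ))
    (u : K) (huint : IsIntegral ℤ u) (huinv : IsIntegral ℤ u⁻¹)
    (hnorm : (u : ℂ) * ((τ u : K) : ℂ) = -1)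
    (hu1 : ∃ r : ℝ, 1 < r ∧ (u : ℂ) = (r : ℂ))
    (ℓ : ℕ) (hℓodd : Odd ℓ) (hℓpos : 0 < ℓ)
    (d : ℤ) (hd : (d : ℂ) = (u : ℂ) ^ (2 * ℓ) + ((u : ℂ)⁻¹) ^ (2 * ℓ) + 1) :
    ((Real.sqrt ((d : ℝ) + 1) : ℝ) : ℂ) = (u : ℂ) ^ ℓ + ((u : ℂ)⁻¹) ^ ℓ ∧
    ∀ ξ η : ℂ, ξ ^ 2 = -2 - ((Real.sqrt ((d : ℝ) + 1) : ℝ) : ℂ) →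
      η ^ 2 = -((u : ℂ) ^ ℓ) →
      IntermediateField.adjoin K {ξ} = IntermediateField.adjoin K {η} ∧
      Module.finrank K (IntermediateField.adjoin K {ξ}) = 2 := by
  obtain ⟨r, hr1, hur⟩ := hu1
  have hr0 : (0:ℝ) < r := lt_trans one_pos hr1
  have hrne : r ≠ 0 := hr0.ne'
  have hrl1 : 1 < r ^ ℓ := one_lt_pow₀ hr1 hℓpos.ne'
  have hrl0 : (0:ℝ) < r ^ ℓ := lt_trans one_pos hrl1
  -- every element of K is real
  have hreal : ∀ z : ℂ, z ∈ K → ∃ s : ℝ, z = (s : ℂ) := by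
    intro z hz
    rw [hK] at hz
    have hle : Subfield.closure {((Real.sqrt D : ℝ) : ℂ)} ≤ Complex.ofRealHom.fieldRange := by
      rw [Subfield.closure_le]
      rintro w hw
      rw [Set.mem_singleton_iff] at hw
      exact ⟨Real.sqrt D, hw.symm⟩
    obtain ⟨s, hs⟩ := hle hz
    exact ⟨s, hs.symm⟩
  have hdR : (d : ℝ) = r ^ (2*ℓ) + (r⁻¹) ^ (2*ℓ) + 1 := by
    rw [hur] at hd
    exact_mod_cast hd
  have hsq : (d : ℝ) + 1 = (r ^ ℓ + (r ^ ℓ)⁻¹) ^ 2 := by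
    rw [hdR]
    field_simp
    have hrr : r ^ (ℓ*2) * r⁻¹ ^ (ℓ*2) = 1 := by rw [← mul_pow, mul_inv_cancel₀ hrne, one_pow]
    linear_combination hrr
  have hsqrt : Real.sqrt ((d : ℝ) + 1) = r ^ ℓ + (r ^ ℓ)⁻¹ := by
    rw [hsq, Real.sqrt_sq (by positivity)]
  have part1 : ((Real.sqrt ((d : ℝ) + 1) : ℝ) : ℂ) = (u : ℂ) ^ ℓ + ((u : ℂ)⁻¹) ^ ℓ := by
    rw [hsqrt, hur]; push_cast; ring
  refine ⟨part1, ?_⟩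
  intro ξ η hξ hη
  have hu0 : (u : ℂ) ≠ 0 := by
    rw [hur]; exact_mod_cast hrne
  have hul0 : (u : ℂ) ^ ℓ ≠ 0 := pow_ne_zero _ hu0
  set c : K := (u ^ ℓ + 1) / u ^ ℓ with hc
  have hcC : ((c : K) : ℂ) = ((u : ℂ) ^ ℓ + 1) / (u : ℂ) ^ ℓ := by
    show K.subtype c = _
    rw [hc, map_div₀, map_add, map_pow, map_one]
    rfl
  have hc0 : ((c : K) : ℂ) ≠ 0 := by
    rw [hcC]
    apply div_ne_zero _ hul0
    rw [hur]
    intro h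
    have h' : (r : ℝ) ^ ℓ + 1 = 0 := by exact_mod_cast h
    nlinarith
  have key : ∀ w : ℂ, w ^ 2 = -((u : ℂ) ^ ℓ) →
      (ξ = w * ((c : K) : ℂ) ∨ ξ = -(w * ((c : K) : ℂ))) →
      IntermediateField.adjoin K {ξ} = IntermediateField.adjoin K {w} ∧
      Module.finrank K (IntermediateField.adjoin K {ξ}) = 2 := by
    intro w hw hcase
    have hwmem : w ∈ IntermediateField.adjoin K {w} :=
      IntermediateField.mem_adjoin_simple_self K w
    have hξmem : ξ ∈ IntermediateField.adjoin K {ξ} :=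
      IntermediateField.mem_adjoin_simple_self K ξ
    have hcmemw : ((c : K) : ℂ) ∈ IntermediateField.adjoin K {w} := by
      exact (IntermediateField.adjoin K {w}).algebraMap_mem c
    have hcmemξ : ((c : K) : ℂ) ∈ IntermediateField.adjoin K {ξ} := by
      exact (IntermediateField.adjoin K {ξ}).algebraMap_mem c
    have hadj : IntermediateField.adjoin K {ξ} = IntermediateField.adjoin K {w} := by
      apply le_antisymm
      · rw [IntermediateField.adjoin_le_iff]
        intro z hz
        rw [Set.mem_singleton_iff] at hz
        subst hz
        rcases hcase with h | h
        · rw [h]; exact mul_mem hwmem hcmemw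
        · rw [h]; exact neg_mem (mul_mem hwmem hcmemw)
      · rw [IntermediateField.adjoin_le_iff]
        intro z hz
        rw [Set.mem_singleton_iff] at hz
        subst hz
        have hz' : z = ξ * ((c : K) : ℂ)⁻¹ ∨ z = -(ξ * ((c : K) : ℂ)⁻¹) := by
          rcases hcase with h | h
          · left; rw [h]; field_simp
          · right; rw [h]; field_simp
        rcases hz' with h' | h'
        · rw [h']; exact mul_mem hξmem (inv_mem hcmemξ)
        · rw [h']; exact neg_mem (mul_mem hξmem (inv_mem hcmemξ))
    refine ⟨hadj, ?_⟩
    rw [hadj]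
    set a : K := -(u ^ ℓ) with ha
    have haC : ((a : K) : ℂ) = -((u : ℂ) ^ ℓ) := by
      show K.subtype a = _
      rw [ha, map_neg, map_pow]
      rfl
    have halg : (algebraMap K ℂ) a = ((a : K) : ℂ) := rfl
    have hroot : Polynomial.aeval w (X ^ 2 - C a) = 0 := by
      simp [hw, halg, haC]
    have hint : IsIntegral K w :=
      ⟨X ^ 2 - C a, monic_X_pow_sub_C a two_ne_zero, hroot⟩
    have hirr : Irreducible (X ^ 2 - C (a : K)) := by
      apply X_pow_sub_C_irreducible_of_prime Nat.prime_two
      intro b hb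
      obtain ⟨s, hs⟩ := hreal (b : ℂ) b.2
      have hbC : K.subtype (b ^ 2) = K.subtype a := congrArg _ hb
      rw [map_pow] at hbC
      have hbC' : ((b : K) : ℂ) ^ 2 = ((a : K) : ℂ) := hbC
      rw [hs, haC, hur] at hbC'
      have hs2 : (s : ℝ) ^ 2 = -(r ^ ℓ) := by exact_mod_cast hbC'
      nlinarith
    have hmin : minpoly K w = X ^ 2 - C a :=
      (minpoly.eq_of_irreducible_of_monic hirr hroot (monic_X_pow_sub_C a two_ne_zero)).symm
    rw [IntermediateField.adjoin.finrank hint, hmin]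
    simp
  have hξw : ξ ^ 2 = (η * ((c : K) : ℂ)) ^ 2 := by
    rw [mul_pow, hη, hcC, hξ, part1]
    field_simp
    have huu : (u : ℂ) ^ ℓ * ((u : ℂ)⁻¹) ^ ℓ = 1 := by rw [← mul_pow, mul_inv_cancel₀ hu0, one_pow]
    linear_combination -huu
  exact key η hη (sq_eq_sq_iff_eq_or_eq_neg.mp hξw)
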